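/- Every locally transitive tournament has a unique minimal τ-retentive set (Schwartz's Conjecture holds for locally transitive tournaments). -/

import Mathlib

variable {V : Type}

/-- Inneighbors of `v` inside the subtournament on `s` (excluding `v` itself). -/
def inn [DecidableEq V] (r : V → V → Prop) [DecidableRel r] (s : Finset V) (v : V) :
    Finset V :=
  (s.filter fun u => r u v).erase v

lemma inn_card_lt [DecidableEq V] (r : V → V → Prop) [DecidableRel r]
    (s : Finset V) (v : V) (hv : v ∈ s) : (inn r s v).card < s.card := by
  have h1 : inn r s v ⊆ s.erase v := by
    intro x hx
    rcases Finset.mem_erase.mp hx with ⟨hxv, hx2⟩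
    exact Finset.mem_erase.mpr ⟨hxv, (Finset.mem_filter.mp hx2).1⟩
  calc (inn r s v).card ≤ (s.erase v).card := Finset.card_le_card h1
    _ < s.card := Finset.card_erase_lt_of_mem hv

/-- The tournament equilibrium set of the subtournament of `r` on `s`:
the union of all minimal τ-retentive sets. -/
def tau [DecidableEq V] (r : V → V → Prop) [DecidableRel r] (s : Finset V) : Set V :=
  {x | ∃ A : Finset V, x ∈ A ∧ A ⊆ s ∧ A.Nonempty ∧
    (∀ v, v ∈ s → v ∈ A → ((inn r s v).Nonempty → tau r (inn r s v) ⊆ ↑A)) ∧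
    ∀ B : Finset V, B ⊆ s → B ⊂ A →
      ¬ (B.Nonempty ∧
        ∀ v, v ∈ s → v ∈ B → ((inn r s v).Nonempty → tau r (inn r s v) ⊆ ↑B))}
termination_by s.card
decreasing_by
  all_goals exact inn_card_lt r s v (by assumption)

/-- `A` is a τ-retentive set of the tournament on `s`. -/
def Retentive [DecidableEq V] (r : V → V → Prop) [DecidableRel r] (s A : Finset V) : Prop :=
  A ⊆ s ∧ A.Nonempty ∧ ∀ v ∈ A, (inn r s v).Nonempty → tau r (inn r s v) ⊆ ↑A

/-- `A` is a minimal τ-retentive set of the tournament on `s`. -/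
def MinRetentive [DecidableEq V] (r : V → V → Prop) [DecidableRel r] (s A : Finset V) : Prop :=
  Retentive r s A ∧ ∀ B, Retentive r s B → B ⊆ A → B = A

/-- `r` is a tournament on the vertex set `s`. -/
def IsTournament (r : V → V → Prop) (s : Finset V) : Prop :=
  (∀ v ∈ s, ¬ r v v) ∧ ∀ u ∈ s, ∀ v ∈ s, u ≠ v → (r u v ↔ ¬ r v u)

/-- `u` is the captain of `v` in the subtournament on `s`:
`u` dominates `v` and all other inneighbors of `v`. -/
def IsCaptain (r : V → V → Prop) (s : Finset V) (u v : V) : Prop :=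
  u ∈ s ∧ v ∈ s ∧ r u v ∧ ∀ w ∈ s, w ≠ u → r w v → r u w

/-- The (undirected) domination graph of the subtournament on `s`. -/
def domGraph (r : V → V → Prop) (s : Finset V) : SimpleGraph V where
  Adj u v := (IsCaptain r s u v ∨ IsCaptain r s v u) ∧ u ≠ v
  symm := by
    constructor
    intro u v h
    exact ⟨h.1.symm, h.2.symm⟩
  loopless := by
    constructor
    intro u h
    exact h.2 rfl

/-!
In a tournament whose inneighbourhoods are transitive, every vertex `v` that is beaten at all has
a captain `c v`, the winner of the transitive tournament on its inneighbourhood; hence `τ` of that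
inneighbourhood is `{c v}`. Extending `c` by `c v = v` on an undominated vertex, the τ-retentive
sets are the nonempty sets closed under `c`, and the minimal ones are the cycles of `c`, so it
suffices that any two cycles of `c` meet. An undominated vertex is everybody's captain. Along a
cycle of length at least two, `c^[i + t] v` beats `c^[i] v` exactly when `t` is odd, so such cycles
are odd. Finally, if a captain chain `w, c w, c² w, …` avoided an odd cycle of length `p` through
`v`, then whether `c^[j] w` beats `v` would alternate with `j`, yet hold at `j + p` whenever it
holds at `j`.
-/

open Function

theorem exists_mem_periodicPts_of_mapsTo {α : Type*} {f : α → α} {B : Finset α}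
    (hB : Set.MapsTo f B B) (hne : B.Nonempty) : ∃ v ∈ B, v ∈ periodicPts f := by
  obtain ⟨x, hx⟩ := hne
  obtain ⟨m, n, hmn, heq⟩ :=
    B.finite_toSet.exists_lt_map_eq_of_forall_mem (f := fun n => f^[n] x) fun n => hB.iterate n hx
  refine ⟨f^[m] x, hB.iterate m hx, mk_mem_periodicPts (Nat.sub_pos_of_lt hmn) ?_⟩
  change f^[n - m] (f^[m] x) = f^[m] x
  rw [← iterate_add_apply, Nat.sub_add_cancel hmn.le]
  exact heq.symm

theorem exists_iterate_iterate_eq_of_mem_periodicPts {α : Type*} {f : α → α} {x : α}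
    (hx : x ∈ periodicPts f) (n : ℕ) : ∃ m, f^[m] (f^[n] x) = x := by
  obtain ⟨p, hp, hpx⟩ := mem_periodicPts.1 hx
  refine ⟨(p - 1) * n, ?_⟩
  rw [← iterate_add_apply, Nat.sub_one_mul, Nat.sub_add_cancel (Nat.le_mul_of_pos_left n hp)]
  exact (hpx.mul_const n).eq

theorem iterate_add_ne_iterate {α : Type*} {f : α → α} {x : α} (hx : x ∈ periodicPts f)
    {t : ℕ} (ht : 0 < t) (htp : t < minimalPeriod f x) (i : ℕ) : f^[i + t] x ≠ f^[i] x := by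
  intro h
  have : IsPeriodicPt f t (f^[i] x) := by
    rw [IsPeriodicPt, IsFixedPt, ← iterate_add_apply, add_comm, h]
  exact (this.minimalPeriod_le ht).not_gt (minimalPeriod_apply_iterate hx i ▸ htp)

theorem mem_toFinset_periodicOrbit {α : Type*} [DecidableEq α] {f : α → α} {x y : α}
    (hx : x ∈ periodicPts f) : y ∈ (periodicOrbit f x).toFinset ↔ ∃ n, f^[n] x = y := by
  rw [← mem_periodicOrbit_iff hx, periodicOrbit, Cycle.coe_toFinset, List.mem_toFinset,
    Cycle.mem_coe_iff]

section Tau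

variable [DecidableEq V] {r : V → V → Prop} [DecidableRel r]

theorem mem_inn {s : Finset V} {v x : V} : x ∈ inn r s v ↔ x ≠ v ∧ x ∈ s ∧ r x v := by
  simp [inn]

theorem inn_ssubset {s : Finset V} {v : V} (hv : v ∈ s) : inn r s v ⊂ s :=
  (Finset.erase_subset_erase v (Finset.filter_subset _ s)).trans_ssubset (Finset.erase_ssubset hv)

theorem mem_tau_iff {s : Finset V} {x : V} :
    x ∈ tau r s ↔ ∃ A, MinRetentive r s A ∧ x ∈ A := by
  rw [tau]
  constructor
  · rintro ⟨A, hxA, hAs, hAne, hAcl, hAmin⟩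
    refine ⟨A, ⟨⟨hAs, hAne, fun v hv => hAcl v (hAs hv) hv⟩, fun B hB hBA => ?_⟩, hxA⟩
    by_contra hne
    exact hAmin B hB.1 (hBA.ssubset_of_ne hne) ⟨hB.2.1, fun v _ hv => hB.2.2 v hv⟩
  · rintro ⟨A, ⟨⟨hAs, hAne, hAcl⟩, hAmin⟩, hxA⟩
    refine ⟨A, hxA, hAs, hAne, fun v _ hv => hAcl v hv, fun B hBs hBA ⟨hBne, hBcl⟩ => ?_⟩
    exact hBA.ne (hAmin B ⟨hBs, hBne, fun v hv => hBcl v (hBs hv) hv⟩ hBA.subset)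

theorem tau_eq_singleton_of_dominates {t : Finset V} {u : V} (hu : u ∈ t)
    (hdom : ∀ w ∈ t, w ≠ u → r u w ∧ ¬ r w u) : tau r t = {u} := by
  induction t using Finset.strongInduction with
  | H t ih =>
    have hinn : inn r t u = ∅ := Finset.eq_empty_of_forall_notMem fun w hw =>
      (hdom w (mem_inn.1 hw).2.1 (mem_inn.1 hw).1).2 (mem_inn.1 hw).2.2
    have hret : Retentive r t {u} := ⟨by simpa, Finset.singleton_nonempty u, by simp [hinn]⟩
    have hmem : ∀ A, Retentive r t A → u ∈ A := by
      rintro A ⟨hAt, ⟨x, hx⟩, hAcl⟩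
      by_cases hxu : x = u
      · exact hxu ▸ hx
      have hux : u ∈ inn r t x := mem_inn.2 ⟨Ne.symm hxu, hu, (hdom x (hAt hx) hxu).1⟩
      have h := hAcl x hx ⟨u, hux⟩
      rwa [ih _ (inn_ssubset (hAt hx)) hux fun w hw hwu => hdom w (mem_inn.1 hw).2.1 hwu,
        Set.singleton_subset_iff] at h
    ext x
    rw [mem_tau_iff, Set.mem_singleton_iff]
    constructor
    · rintro ⟨A, hA, hxA⟩
      rw [← hA.2 {u} hret (Finset.singleton_subset_iff.2 (hmem A hA.1))] at hxA
      exact Finset.mem_singleton.1 hxA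
    · rintro rfl
      refine ⟨{x}, ⟨hret, fun B hB hBx => hBx.antisymm ?_⟩, Finset.mem_singleton_self x⟩
      exact Finset.singleton_subset_iff.2 (hmem B hB)

end Tau

section Captain

variable {r : V → V → Prop} {s : Finset V}

theorem IsTournament.asymm (hT : IsTournament r s) {a b : V} (ha : a ∈ s) (hb : b ∈ s)
    (hab : r a b) : ¬ r b a := by
  rcases eq_or_ne a b with rfl | hne
  · exact absurd hab (hT.1 a ha)
  · exact (hT.2 a ha b hb hne).1 hab

theorem IsTournament.rel_of_not_rel (hT : IsTournament r s) {a b : V} (ha : a ∈ s) (hb : b ∈ s)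
    (hne : a ≠ b) (h : ¬ r a b) : r b a :=
  (hT.2 b hb a ha hne.symm).2 h

theorem IsTournament.exists_dominating (hT : IsTournament r s) (hne : s.Nonempty)
    (htrans : ∀ a ∈ s, ∀ b ∈ s, ∀ c ∈ s, r a b → r b c → r a c) :
    ∃ u ∈ s, ∀ w ∈ s, w ≠ u → r u w := by
  classical
  obtain ⟨u, hu, hmax⟩ := s.exists_max_image (fun a => (s.filter (r a ·)).card) hne
  refine ⟨u, hu, fun w hw hwu => ?_⟩
  by_contra h
  have hwu' : r w u := hT.rel_of_not_rel hu hw (Ne.symm hwu) h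
  -- `w` beats `u` and, by transitivity, everything `u` beats.
  have hlt : s.filter (r u ·) ⊂ s.filter (r w ·) := by
    refine (Finset.ssubset_iff_of_subset fun x hx => ?_).2 ⟨u, ?_, ?_⟩
    · rw [Finset.mem_filter] at hx ⊢
      exact ⟨hx.1, htrans w hw u hu x hx.1 hwu' hx.2⟩
    · exact Finset.mem_filter.2 ⟨hu, hwu'⟩
    · exact fun hu' => hT.1 u hu (Finset.mem_filter.1 hu').2
  exact (Finset.card_lt_card hlt).not_ge (hmax w hw)

theorem IsCaptain.ne (hT : IsTournament r s) {u v : V} (h : IsCaptain r s u v) : u ≠ v := by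
  rintro rfl
  exact hT.1 u h.1 h.2.2.1

theorem IsCaptain.unique (hT : IsTournament r s) {u u' v : V} (h : IsCaptain r s u v)
    (h' : IsCaptain r s u' v) : u = u' := by
  by_contra hne
  exact hT.asymm h.1 h'.1 (h.2.2.2 u' h'.1 (Ne.symm hne) h'.2.2.1) (h'.2.2.2 u h.1 hne h.2.2.1)

variable [DecidableEq V] [DecidableRel r]

theorem IsCaptain.mem_inn (hT : IsTournament r s) {u v : V} (h : IsCaptain r s u v) :
    u ∈ inn r s v :=
  _root_.mem_inn.2 ⟨h.ne hT, h.1, h.2.2.1⟩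

theorem IsCaptain.tau_inn (hT : IsTournament r s) {u v : V} (h : IsCaptain r s u v) :
    tau r (inn r s v) = {u} :=
  tau_eq_singleton_of_dominates (h.mem_inn hT) fun w hw hwu =>
    have hrw := h.2.2.2 w (_root_.mem_inn.1 hw).2.1 hwu (_root_.mem_inn.1 hw).2.2
    ⟨hrw, hT.asymm h.1 (_root_.mem_inn.1 hw).2.1 hrw⟩

theorem isCaptain_of_inn_eq_empty (hT : IsTournament r s) {v w : V} (hv : v ∈ s)
    (hinn : inn r s v = ∅) (hw : w ∈ s) (hwv : w ≠ v) : IsCaptain r s v w := by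
  have hbeats : ∀ x ∈ s, x ≠ v → r v x := fun x hx hxv =>
    hT.rel_of_not_rel hx hv hxv fun hxr => by
      simpa [hinn] using (mem_inn (r := r)).2 ⟨hxv, hx, hxr⟩
  exact ⟨hv, hw, hbeats w hw hwv, fun x hx hxv _ => hbeats x hx hxv⟩

def HasCaptains (r : V → V → Prop) [DecidableRel r] (s : Finset V) : Prop :=
  ∀ v ∈ s, (inn r s v).Nonempty → ∃ u, IsCaptain r s u v

theorem hasCaptains_of_transitive_inn (hT : IsTournament r s)
    (hin : ∀ v ∈ s, ∀ a ∈ s, ∀ b ∈ s, ∀ c ∈ s,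
      r a v → r b v → r c v → r a b → r b c → r a c) :
    HasCaptains r s := by
  intro v hv hne
  have hmem : ∀ {a}, a ∈ inn r s v → a ∈ s ∧ r a v := fun ha => (mem_inn.1 ha).2
  have hTinn : IsTournament r (inn r s v) :=
    ⟨fun a ha => hT.1 a (hmem ha).1, fun a ha b hb => hT.2 a (hmem ha).1 b (hmem hb).1⟩
  obtain ⟨u, hu, hdom⟩ := hTinn.exists_dominating hne fun a ha b hb c hc =>
    hin v hv a (hmem ha).1 b (hmem hb).1 c (hmem hc).1 (hmem ha).2 (hmem hb).2 (hmem hc).2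
  refine ⟨u, (hmem hu).1, hv, (hmem hu).2, fun w hw hwu hwv =>
    hdom w (mem_inn.2 ⟨?_, hw, hwv⟩) hwu⟩
  rintro rfl
  exact hT.1 w hw hwv

end Captain

section CaptainCycles

variable {r : V → V → Prop} {s : Finset V} {g : V → V}

theorem odd_minimalPeriod_of_isCaptain (hT : IsTournament r s) {v : V} (hv : v ∈ periodicPts g)
    (hchain : ∀ n, IsCaptain r s (g^[n + 1] v) (g^[n] v)) : Odd (minimalPeriod g v) := by
  have hs : ∀ i, g^[i] v ∈ s := fun i => (hchain i).2.1
  have hp : 1 < minimalPeriod g v := by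
    have h0 := minimalPeriod_pos_of_mem_periodicPts hv
    have h1 : minimalPeriod g v ≠ 1 := fun h =>
      (hchain 0).ne hT (minimalPeriod_eq_one_iff_isFixedPt.1 h)
    omega
  have key : ∀ t, 0 < t → t < minimalPeriod g v →
      ∀ i, (r (g^[i + t] v) (g^[i] v) ↔ Odd t) := by
    intro t
    induction t with
    | zero => intro h; omega
    | succ t ih =>
      intro _ htp i
      rcases Nat.eq_zero_or_pos t with rfl | ht
      · simpa using (hchain i).2.2.1
      have hne : g^[i + (t + 1)] v ≠ g^[i] v := iterate_add_ne_iterate hv t.succ_pos htp i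
      rcases Nat.even_or_odd t with heven | hodd
      · -- `g^[i] v` beats `g^[i + t] v`, hence loses to its captain
        have h1 : r (g^[i] v) (g^[i + t] v) :=
          hT.rel_of_not_rel (hs _) (hs _) (iterate_add_ne_iterate hv ht (by omega) i)
            fun h => Nat.not_odd_iff_even.2 heven ((ih ht (by omega) i).1 h)
        simp only [heven.add_one, iff_true]
        exact (hchain (i + t)).2.2.2 _ (hs i) hne.symm h1
      · -- else the captain `g^[i + 1] v` of `g^[i] v` would beat `g^[i + 1 + t] v`, against `ih`
        simp only [Nat.odd_add_one, hodd, not_true, iff_false]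
        intro h
        have hshift : i + 1 + t = i + (t + 1) := by omega
        have hne' := iterate_add_ne_iterate hv ht (by omega) (i + 1)
        rw [hshift] at hne'
        have h1 := (ih ht (by omega) (i + 1)).2 hodd
        rw [hshift] at h1
        exact hT.asymm (hs _) (hs _) ((hchain i).2.2.2 _ (hs _) hne' h) h1
  have hlast := (hchain (minimalPeriod g v - 1)).2.2.1
  rw [Nat.sub_add_cancel hp.le, iterate_minimalPeriod] at hlast
  have hkey := key (minimalPeriod g v - 1) (by omega) (by omega) 0
  rw [zero_add] at hkey
  obtain ⟨k, hk⟩ :=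
    Nat.not_odd_iff_even.1 fun hodd => hT.asymm (hs _) (hs 0) (hkey.2 hodd) hlast
  exact ⟨k, by omega⟩

theorem exists_iterate_eq_iterate_of_isCaptain (hT : IsTournament r s) {v w : V}
    (hv : v ∈ periodicPts g) (hvc : ∀ n, IsCaptain r s (g^[n + 1] v) (g^[n] v))
    (hwc : ∀ n, IsCaptain r s (g^[n + 1] w) (g^[n] w)) : ∃ i j, g^[i] v = g^[j] w := by
  by_contra! hdisj
  obtain ⟨m, hm⟩ := odd_minimalPeriod_of_isCaptain hT hv hvc
  have hvs : ∀ i, g^[i] v ∈ s := fun i => (hvc i).2.1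
  have hws : ∀ j, g^[j] w ∈ s := fun j => (hwc j).2.1
  have hlock : ∀ i j k, r (g^[i] v) (g^[j] w) → r (g^[i + k] v) (g^[j + k] w) := by
    intro i j k h
    induction k with
    | zero => exact h
    | succ k ih =>
      have h1 := (hwc (j + k)).2.2.2 _ (hvs _) (hdisj _ _) ih
      exact (hvc (i + k)).2.2.2 _ (hws _) (hdisj _ _).symm h1
  set F : ℕ → Prop := fun j => r (g^[j] w) v
  have hstep : ∀ j, ¬ F j → F (j + 1) := fun j h =>
    (hwc j).2.2.2 v (hvs 0) (hdisj 0 (j + 1))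
      (hT.rel_of_not_rel (hws j) (hvs 0) (hdisj 0 j).symm h)
  -- `g v` beats `g^[j] w`; shifting by `2 * m` brings it back to `g^[2 * m + 1] v = v`
  have hback : ∀ j, F j → ¬ F (j + 2 * m) := fun j h hF => by
    have := hlock 1 j (2 * m) ((hvc 0).2.2.2 _ (hws j) (hdisj 1 j).symm h)
    rw [show 1 + 2 * m = minimalPeriod g v by omega, iterate_minimalPeriod] at this
    exact hT.asymm (hvs 0) (hws _) this hF
  have halt : ∀ j, F (j + 1) ↔ ¬ F j := fun j =>
    ⟨fun h1 h0 => hback (j + 1) h1 (by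
      rw [show j + 1 + 2 * m = j + 2 * m + 1 by omega]
      exact hstep _ (hback j h0)), hstep j⟩
  have hper : ∀ j k, F (j + 2 * k) ↔ F j := by
    intro j k
    induction k with
    | zero => rfl
    | succ k ih => rw [show j + 2 * (k + 1) = j + 2 * k + 1 + 1 by ring, halt, halt, not_not, ih]
  have hnF : ∀ j, ¬ F j := fun j h => hback j h ((hper j m).2 h)
  exact hnF 1 (hstep 0 (hnF 0))

end CaptainCycles

section CaptainMap

variable {r : V → V → Prop} {s : Finset V}

open Classical in
noncomputable def captain (r : V → V → Prop) (s : Finset V) (v : V) : V :=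
  if h : ∃ u, IsCaptain r s u v then h.choose else v

theorem isCaptain_captain {v : V} (h : ∃ u, IsCaptain r s u v) :
    IsCaptain r s (captain r s v) v := by
  rw [captain, dif_pos h]
  exact h.choose_spec

theorem captain_eq_self {v : V} (h : ¬ ∃ u, IsCaptain r s u v) : captain r s v = v := by
  rw [captain, dif_neg h]

theorem isCaptain_captain_of_ne {v : V} (h : captain r s v ≠ v) :
    IsCaptain r s (captain r s v) v :=
  isCaptain_captain (not_not.1 (mt captain_eq_self h))

theorem IsCaptain.captain_eq (hT : IsTournament r s) {u v : V} (h : IsCaptain r s u v) :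
    captain r s v = u :=
  (isCaptain_captain ⟨u, h⟩).unique hT h

theorem mapsTo_captain : Set.MapsTo (captain r s) s s := fun v hv => by
  by_cases h : ∃ u, IsCaptain r s u v
  · exact (isCaptain_captain h).1
  · rwa [captain_eq_self h]

theorem isCaptain_iterate_captain {v : V} (hv : v ∈ periodicPts (captain r s))
    (hfix : captain r s v ≠ v) (n : ℕ) :
    IsCaptain r s ((captain r s)^[n + 1] v) ((captain r s)^[n] v) := by
  rw [iterate_succ_apply']
  refine isCaptain_captain_of_ne fun h => hfix ?_
  refine minimalPeriod_eq_one_iff_isFixedPt.1 ?_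
  rw [← minimalPeriod_apply_iterate hv n]
  exact minimalPeriod_eq_one_iff_isFixedPt.2 h

variable [DecidableEq V] [DecidableRel r]

theorem captain_eq_of_captain_eq_self (hT : IsTournament r s) (hcap : HasCaptains r s) {v w : V}
    (hv : v ∈ s) (hfix : captain r s v = v) (hw : w ∈ s) (hwv : w ≠ v) :
    captain r s w = v := by
  have hnone : ¬ ∃ u, IsCaptain r s u v := fun h => (isCaptain_captain h).ne hT hfix
  have hinn : inn r s v = ∅ :=
    Finset.not_nonempty_iff_eq_empty.1 fun hne => hnone (hcap v hv hne)
  exact (isCaptain_of_inn_eq_empty hT hv hinn hw hwv).captain_eq hT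

theorem retentive_iff (hT : IsTournament r s) (hcap : HasCaptains r s) {A : Finset V} :
    Retentive r s A ↔ A ⊆ s ∧ A.Nonempty ∧ Set.MapsTo (captain r s) A A := by
  refine and_congr_right fun hAs => and_congr_right fun _ => forall₂_congr fun v hv => ?_
  by_cases hinn : (inn r s v).Nonempty
  · obtain ⟨u, hu⟩ := hcap v (hAs hv) hinn
    simp [hinn, hu.tau_inn hT, hu.captain_eq hT]
  · have hnone : ¬ ∃ u, IsCaptain r s u v := fun ⟨u, hu⟩ => hinn ⟨u, hu.mem_inn hT⟩
    simp [hinn, captain_eq_self hnone, hv]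

theorem Retentive.toFinset_periodicOrbit_subset (hT : IsTournament r s) (hcap : HasCaptains r s)
    {A : Finset V} (hA : Retentive r s A) {v x : V} (hv : v ∈ periodicPts (captain r s))
    (hx : x ∈ A) {m : ℕ} (hxv : (captain r s)^[m] x = v) :
    (periodicOrbit (captain r s) v).toFinset ⊆ A := by
  intro y hy
  obtain ⟨n, rfl⟩ := (mem_toFinset_periodicOrbit hv).1 hy
  have := ((retentive_iff hT hcap).1 hA).2.2.iterate (n + m) hx
  rwa [iterate_add_apply, hxv] at this

theorem minRetentive_toFinset_periodicOrbit (hT : IsTournament r s) (hcap : HasCaptains r s)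
    {v : V} (hvs : v ∈ s) (hv : v ∈ periodicPts (captain r s)) :
    MinRetentive r s (periodicOrbit (captain r s) v).toFinset := by
  have hsub : (periodicOrbit (captain r s) v).toFinset ⊆ s := fun y hy => by
    obtain ⟨n, rfl⟩ := (mem_toFinset_periodicOrbit hv).1 hy
    exact mapsTo_captain.iterate n hvs
  have hret : Retentive r s (periodicOrbit (captain r s) v).toFinset := by
    refine (retentive_iff hT hcap).2
      ⟨hsub, ⟨v, (mem_toFinset_periodicOrbit hv).2 ⟨0, rfl⟩⟩, ?_⟩
    intro y hy
    obtain ⟨n, rfl⟩ := (mem_toFinset_periodicOrbit hv).1 hy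
    exact (mem_toFinset_periodicOrbit hv).2 ⟨n + 1, iterate_succ_apply' _ n v⟩
  refine ⟨hret, fun B hB hBR => hBR.antisymm ?_⟩
  obtain ⟨b, hb⟩ := hB.2.1
  obtain ⟨n, rfl⟩ := (mem_toFinset_periodicOrbit hv).1 (hBR hb)
  obtain ⟨m, hm⟩ := exists_iterate_iterate_eq_of_mem_periodicPts hv n
  exact hB.toFinset_periodicOrbit_subset hT hcap hv hb hm

theorem exists_iterate_captain_eq (hT : IsTournament r s) (hcap : HasCaptains r s) {v w : V}
    (hvs : v ∈ s) (hws : w ∈ s) (hv : v ∈ periodicPts (captain r s))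
    (hw : w ∈ periodicPts (captain r s)) : ∃ m, (captain r s)^[m] w = v := by
  suffices ∃ i j, (captain r s)^[i] v = (captain r s)^[j] w by
    obtain ⟨i, j, h⟩ := this
    obtain ⟨m, hm⟩ := exists_iterate_iterate_eq_of_mem_periodicPts hv i
    exact ⟨m + j, by rw [iterate_add_apply, ← h, hm]⟩
  by_cases hvfix : captain r s v = v
  · rcases eq_or_ne w v with rfl | hwv
    · exact ⟨0, 0, rfl⟩
    · exact ⟨0, 1, (captain_eq_of_captain_eq_self hT hcap hvs hvfix hws hwv).symm⟩
  by_cases hwfix : captain r s w = w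
  · exact ⟨1, 0,
      captain_eq_of_captain_eq_self hT hcap hws hwfix hvs fun h => hvfix (h ▸ hwfix)⟩
  exact exists_iterate_eq_iterate_of_isCaptain hT hv (isCaptain_iterate_captain hv hvfix)
    (isCaptain_iterate_captain hw hwfix)

end CaptainMap

theorem stmt15_general [DecidableEq V] (r : V → V → Prop) [DecidableRel r] (s : Finset V)
    (hT : IsTournament r s) (hne : s.Nonempty)
    (hin : ∀ v ∈ s, ∀ a ∈ s, ∀ b ∈ s, ∀ c ∈ s,
      r a v → r b v → r c v → r a b → r b c → r a c) :
    ∃! R, MinRetentive r s R := by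
  have hcap := hasCaptains_of_transitive_inn hT hin
  obtain ⟨v, hvs, hv⟩ := exists_mem_periodicPts_of_mapsTo mapsTo_captain hne
  have hR := minRetentive_toFinset_periodicOrbit hT hcap hvs hv
  refine ⟨_, hR, fun R' hR' => (hR'.2 _ hR.1 ?_).symm⟩
  obtain ⟨w, hwR', hw⟩ :=
    exists_mem_periodicPts_of_mapsTo ((retentive_iff hT hcap).1 hR'.1).2.2 hR'.1.2.1
  obtain ⟨m, hm⟩ := exists_iterate_captain_eq hT hcap hvs (hR'.1.1 hwR') hv hw
  exact hR'.1.toFinset_periodicOrbit_subset hT hcap hv hwR' hm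

theorem stmt15 [DecidableEq V] (r : V → V → Prop) [DecidableRel r] (s : Finset V)
    (hT : IsTournament r s) (hne : s.Nonempty)
    (hin : ∀ v ∈ s, ∀ a ∈ s, ∀ b ∈ s, ∀ c ∈ s,
      r a v → r b v → r c v → r a b → r b c → r a c)
    (hout : ∀ v ∈ s, ∀ a ∈ s, ∀ b ∈ s, ∀ c ∈ s,
      r v a → r v b → r v c → r a b → r b c → r a c) :
    ∃! R, MinRetentive r s R :=
  stmt15_general r s hT hne hin
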